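/- Let r be a positive integer. Let Λ := ExteriorAlgebra ℝ (Fin r → ℝ), let e_α denote the image under the canonical inclusion of the α-th standard basis vector, and set etop := e_0 * e_1 * ⋯ * e_{r−1}. Equip Λ ⊗[ℝ] Λ with the tensor-product algebra structure, in which (a ⊗ b)·(c ⊗ d) = (a·c) ⊗ (b·d) (the algebra of double forms). For T ∈ Matrix (Fin r) (Fin r) ℝ define ω_T := Σ_{α, i ∈ Fin r} (T α i) • (e_α ⊗ e_i) ∈ Λ ⊗ Λ. Then ω_T^r = (r! · det T) • (etop ⊗ etop). -/

import Mathlib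

/-! Writing `T α` for the `α`-th row, `ω = ∑ α, e α ⊗ ι (T α)`. Expanding `ω ^ r` gives
`∑ f, ιMulti (e ∘ f) ⊗ ιMulti (T ∘ f)` over all `f : Fin r → Fin r`: the terms with `f` not
injective vanish, and for a permutation the two signs cancel, so `ω ^ r = r! • etop ⊗ ιMulti T`.
Finally `ιMulti T = det T • etop`, as for any alternating map on `ℝ^r`. -/

open scoped TensorProduct

theorem Fintype.sum_pow_eq_sum_prod_ofFn {A ι : Type*} [Semiring A] [Fintype ι] (g : ι → A)
    (n : ℕ) :
    (∑ i, g i) ^ n = ∑ f : Fin n → ι, (List.ofFn fun k => g (f k)).prod := by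
  simpa using (MultilinearMap.mkPiAlgebraFin ℕ n A).map_sum fun _ => g

theorem Algebra.TensorProduct.prod_ofFn_tmul {R A B : Type*} [CommSemiring R] [Semiring A]
    [Semiring B] [Algebra R A] [Algebra R B] {n : ℕ} (a : Fin n → A) (b : Fin n → B) :
    (List.ofFn fun k => a k ⊗ₜ[R] b k).prod = (List.ofFn a).prod ⊗ₜ[R] (List.ofFn b).prod := by
  induction n with
  | zero => simp [Algebra.TensorProduct.one_def]
  | succ n ih =>
    simp only [List.ofFn_succ, List.prod_cons, ih, Algebra.TensorProduct.tmul_mul_tmul]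

theorem Fintype.sum_eq_sum_perm_of_not_injective {ι M : Type*} [Fintype ι] [DecidableEq ι]
    [AddCommMonoid M] (g : (ι → ι) → M) (hg : ∀ f, ¬ f.Injective → g f = 0) :
    ∑ f, g f = ∑ σ : Equiv.Perm ι, g σ := by
  refine (Fintype.sum_of_injective _ DFunLike.coe_injective _ _ (fun f hf => hg f ?_)
    fun _ => rfl).symm
  exact fun hinj => hf ⟨Equiv.ofBijective f (Finite.injective_iff_bijective.1 hinj), rfl⟩

namespace AlternatingMap

variable {R M M' N N' ι : Type*} [CommRing R] [AddCommGroup M] [Module R M]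
  [AddCommGroup M'] [Module R M'] [AddCommGroup N] [Module R N] [AddCommGroup N'] [Module R N']
  [Fintype ι] [DecidableEq ι]

theorem apply_eq_basis_det_smul (φ : M [⋀^ι]→ₗ[R] N) (e : Module.Basis ι R M) (v : ι → M) :
    φ v = e.det v • φ e := by
  have : φ = e.det.smulRight (φ e) := by
    refine e.ext_alternating fun i hi => ?_
    let σ : Equiv.Perm ι := Equiv.ofBijective i (Finite.injective_iff_bijective.1 hi)
    change φ (e ∘ σ) = e.det (e ∘ σ) • φ e
    simp [map_perm, Module.Basis.det_self]
  exact DFunLike.congr_fun this v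

theorem apply_eq_det_smul_apply_single (φ : (ι → R) [⋀^ι]→ₗ[R] N) (v : ι → ι → R) :
    φ v = (Matrix.of v).det • φ fun i => Pi.single i 1 := by
  rw [φ.apply_eq_basis_det_smul (Pi.basisFun R ι), Pi.basisFun_det_apply,
    ← funext (Pi.basisFun_apply R ι)]

theorem sum_comp_tmul_comp (φ : M [⋀^ι]→ₗ[R] N) (ψ : M' [⋀^ι]→ₗ[R] N') (v : ι → M)
    (w : ι → M') :
    ∑ f : ι → ι, φ (v ∘ f) ⊗ₜ[R] ψ (w ∘ f) = (Fintype.card ι).factorial • φ v ⊗ₜ[R] ψ w := by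
  rw [Fintype.sum_eq_sum_perm_of_not_injective _ fun f hf => by
    rw [φ.map_eq_zero_of_not_injective _ fun h => hf h.of_comp, TensorProduct.zero_tmul]]
  have hperm (σ : Equiv.Perm ι) : φ (v ∘ σ) ⊗ₜ[R] ψ (w ∘ σ) = φ v ⊗ₜ[R] ψ w := by
    rw [map_perm, map_perm, Units.smul_def, Units.smul_def, ← TensorProduct.smul_tmul',
      TensorProduct.tmul_smul, smul_smul, ← Units.val_mul, Int.units_mul_self, Units.val_one,
      one_smul]
  simp [hperm, Fintype.card_perm]

end AlternatingMap

theorem stochasticGBC.doubleForm_pow_eq_det_smul_general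
    (r : ℕ) (T : Matrix (Fin r) (Fin r) ℝ) :
    let e : Fin r → ExteriorAlgebra ℝ (Fin r → ℝ) :=
      fun α => ExteriorAlgebra.ι ℝ (Pi.single α 1)
    let etop : ExteriorAlgebra ℝ (Fin r → ℝ) := ((List.finRange r).map e).prod
    let ω : ExteriorAlgebra ℝ (Fin r → ℝ) ⊗[ℝ] ExteriorAlgebra ℝ (Fin r → ℝ) :=
      ∑ α : Fin r, ∑ i : Fin r, T α i • (e α ⊗ₜ[ℝ] e i)
    ω ^ r = ((r.factorial : ℝ) * T.det) • (etop ⊗ₜ[ℝ] etop) := by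
  intro e etop ω
  have hω : ω = ∑ α, e α ⊗ₜ[ℝ] ExteriorAlgebra.ι ℝ (T α) := by
    simp only [ω, e, ← TensorProduct.tmul_smul, ← TensorProduct.tmul_sum, ← map_smul, ← map_sum,
      ← pi_eq_sum_univ']
  have hetop : etop = ExteriorAlgebra.ιMulti ℝ r fun i => Pi.single i 1 := by
    rw [ExteriorAlgebra.ιMulti_apply, List.ofFn_eq_map]
  calc ω ^ r = ∑ f : Fin r → Fin r, ExteriorAlgebra.ιMulti ℝ r ((fun i => Pi.single i 1) ∘ f)
        ⊗ₜ[ℝ] ExteriorAlgebra.ιMulti ℝ r ((fun α => T α) ∘ f) := by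
        simp only [hω, Fintype.sum_pow_eq_sum_prod_ofFn, Algebra.TensorProduct.prod_ofFn_tmul,
          ExteriorAlgebra.ιMulti_apply, Function.comp_apply, e]
    _ = r.factorial • (etop ⊗ₜ[ℝ] ExteriorAlgebra.ιMulti ℝ r fun α => T α) := by
        rw [AlternatingMap.sum_comp_tmul_comp, Fintype.card_fin, hetop]
    _ = ((r.factorial : ℝ) * T.det) • (etop ⊗ₜ[ℝ] etop) := by
        rw [AlternatingMap.apply_eq_det_smul_apply_single, ← hetop, TensorProduct.tmul_smul,
          ← Nat.cast_smul_eq_nsmul ℝ, smul_smul]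
        rfl

/-- In the algebra of double forms `Λ ⊗[ℝ] Λ`, where
`Λ = ExteriorAlgebra ℝ (Fin r → ℝ)` and the product is componentwise
(`(a ⊗ b)(c ⊗ d) = (a*c) ⊗ (b*d)`), the `(1,1)`-double form
`ω_T = ∑_{α,i} T α i • (e α ⊗ e i)` associated to an `r × r` real matrix `T` satisfies
`ω_T ^ r = (r! ⬝ det T) • (etop ⊗ etop)`. -/
theorem stochasticGBC.doubleForm_pow_eq_det_smul
    (r : ℕ) (hr : 0 < r) (T : Matrix (Fin r) (Fin r) ℝ) :
    let e : Fin r → ExteriorAlgebra ℝ (Fin r → ℝ) :=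
      fun α => ExteriorAlgebra.ι ℝ (Pi.single α 1)
    let etop : ExteriorAlgebra ℝ (Fin r → ℝ) := ((List.finRange r).map e).prod
    let ω : ExteriorAlgebra ℝ (Fin r → ℝ) ⊗[ℝ] ExteriorAlgebra ℝ (Fin r → ℝ) :=
      ∑ α : Fin r, ∑ i : Fin r, T α i • (e α ⊗ₜ[ℝ] e i)
    ω ^ r = ((r.factorial : ℝ) * T.det) • (etop ⊗ₜ[ℝ] etop) :=
  stochasticGBC.doubleForm_pow_eq_det_smul_general r T
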